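/- The cartesian product of finitely many quasi-Frank-and-Wolfe sets is a quasi-Frank-and-Wolfe set. -/

import Mathlib

open Pointwise

noncomputable section

/-- A quadratic function on a real vector space. -/
def IsQuadratic {E : Type*} [AddCommGroup E] [Module ℝ E] (f : E → ℝ) : Prop :=
  ∃ (B : E →ₗ[ℝ] E →ₗ[ℝ] ℝ) (l : E →ₗ[ℝ] ℝ) (c : ℝ), ∀ x, f x = B x x + l x + c

/-- A quasi-Frank-and-Wolfe set: a convex set on which every quadratic function
which is quasi-convex on the set and bounded below attains its infimum. -/
def IsQFWSet {E : Type*} [AddCommGroup E] [Module ℝ E] (F : Set E) : Prop :=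
  Convex ℝ F ∧ ∀ f : E → ℝ, IsQuadratic f →
    (∀ α : ℝ, Convex ℝ {x ∈ F | f x ≤ α}) → BddBelow (f '' F) →
    ∃ x₀ ∈ F, ∀ x ∈ F, f x₀ ≤ f x

/-!
A nonempty convex set in a finite-dimensional space all of whose linear images are closed is a
qFW-set, and conversely a qFW-set has closed linear images: if `w` lies in the closure of `L '' F`,
a minimizer of the convex quadratic `‖L z - w‖ ^ 2` over `F` is mapped to `w`. Closed linear images
pass to products because `L '' (F₁ ×ˢ F₂) = L₁ '' F₁ + L₂ '' F₂`, and the Minkowski sum of two such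
convex sets is closed, by induction on dimension: an unbounded approximating sequence `x k + y k`
yields a direction `u` with `u` and `-u` asymptotic directions of the two summands, so projecting
along `u` loses nothing. The same induction shows that on such a set a quadratic bounded below
with a convex sublevel set attains its infimum: an unbounded minimizing sequence yields a
direction along which the quadratic is constant on a hyperplane containing the sublevel set.
-/

open Filter Topology Module

universe u

section ClosedLinearImages

variable {E : Type u} [NormedAddCommGroup E] [NormedSpace ℝ E]

def HasClosedLinearImages (C : Set E) : Prop :=
  ∀ (F : Type u) [NormedAddCommGroup F] [NormedSpace ℝ F] [FiniteDimensional ℝ F]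
    (L : E →ₗ[ℝ] F), IsClosed (L '' C)

namespace HasClosedLinearImages

variable {C : Set E}

theorem isClosed [FiniteDimensional ℝ E] (hC : HasClosedLinearImages C) : IsClosed C := by
  simpa using hC E LinearMap.id

theorem image {E' : Type u} [NormedAddCommGroup E'] [NormedSpace ℝ E'] [FiniteDimensional ℝ E']
    (hC : HasClosedLinearImages C) (L : E →ₗ[ℝ] E') : HasClosedLinearImages (L '' C) := by
  intro F _ _ _ M
  rw [Set.image_image]
  exact hC F (M ∘ₗ L)

theorem inter_preimage_singleton (hC : HasClosedLinearImages C) (φ : E →ₗ[ℝ] ℝ) (r : ℝ) :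
    HasClosedLinearImages (C ∩ φ ⁻¹' {r}) := by
  intro F _ _ _ M
  have h : M '' (C ∩ φ ⁻¹' {r}) = (fun w => (w, r)) ⁻¹' (M.prod φ '' C) := by
    ext w
    simp only [Set.mem_image, Set.mem_inter_iff, Set.mem_preimage, Set.mem_singleton_iff,
      LinearMap.prod_apply, Function.prod, Prod.mk.injEq]
    exact exists_congr fun z => by tauto
  rw [h]
  exact (hC (F × ℝ) (M.prod φ)).preimage (by fun_prop)

end HasClosedLinearImages

end ClosedLinearImages

section AsymptoticCone

variable {V : Type*} [AddCommGroup V] [Module ℝ V] [TopologicalSpace V] [IsTopologicalAddGroup V]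
  [ContinuousSMul ℝ V]

theorem mem_asymptoticCone_of_tendsto {ι : Type*} {l : Filter ι} [l.NeBot] {s : Set V}
    {x : ι → V} {c : ι → ℝ} {u : V} (hx : ∀ᶠ i in l, x i ∈ s) (hc : Tendsto c l atTop)
    (hu : Tendsto (fun i => (c i)⁻¹ • x i) l (𝓝 u)) : u ∈ asymptoticCone ℝ s := by
  refine (hc.atTop_smul_nhds_tendsto_asymptoticNhds hu).frequently (Eventually.frequently ?_)
  filter_upwards [hx, hc.eventually_gt_atTop 0] with i hxi hci
  rwa [smul_inv_smul₀ hci.ne']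

theorem add_add_smul_mem_add {C₁ C₂ : Set V} {u a b : V} (hc₁ : Convex ℝ C₁) (hC₁ : IsClosed C₁)
    (hc₂ : Convex ℝ C₂) (hC₂ : IsClosed C₂) (hu₁ : u ∈ asymptoticCone ℝ C₁)
    (hu₂ : -u ∈ asymptoticCone ℝ C₂) (ha : a ∈ C₁) (hb : b ∈ C₂) (r : ℝ) :
    a + b + r • u ∈ C₁ + C₂ := by
  rcases le_total 0 r with hr | hr
  · refine ⟨r • u +ᵥ a, hc₁.smul_vadd_mem_of_isClosed_of_mem_asymptoticCone hC₁ hr hu₁ ha,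
      b, hb, ?_⟩
    rw [vadd_eq_add]; module
  · refine ⟨a, ha, (-r) • -u +ᵥ b,
      hc₂.smul_vadd_mem_of_isClosed_of_mem_asymptoticCone hC₂ (neg_nonneg.2 hr) hu₂ hb, ?_⟩
    rw [vadd_eq_add]; module

end AsymptoticCone

theorem exists_subseq_tendsto_or_norm_tendsto_atTop {E : Type*} [NormedAddCommGroup E]
    [NormedSpace ℝ E] [ProperSpace E] (x : ℕ → E) :
    (∃ (a : E) (φ : ℕ → ℕ), StrictMono φ ∧ Tendsto (x ∘ φ) atTop (𝓝 a)) ∨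
      ∃ (u : E) (φ : ℕ → ℕ), StrictMono φ ∧ u ≠ 0 ∧ Tendsto (fun k => ‖x (φ k)‖) atTop atTop ∧
        Tendsto (fun k => ‖x (φ k)‖⁻¹ • x (φ k)) atTop (𝓝 u) := by
  by_cases hx : Tendsto (fun k => ‖x k‖) atTop atTop
  · right
    have hsphere : ∀ᶠ k in atTop, ‖x k‖⁻¹ • x k ∈ Metric.sphere (0 : E) 1 := by
      filter_upwards [hx.eventually_gt_atTop 0] with k hk
      simp [norm_smul, hk.ne']
    obtain ⟨u, hu, φ, hφ, hlim⟩ := tendsto_subseq_of_frequently_bounded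
      Metric.isBounded_sphere hsphere.frequently
    rw [Metric.isClosed_sphere.closure_eq, mem_sphere_zero_iff_norm] at hu
    exact ⟨u, φ, hφ, norm_ne_zero_iff.1 (by simp [hu]), hx.comp hφ.tendsto_atTop, hlim⟩
  · left
    obtain ⟨R, hR⟩ : ∃ R, ∃ᶠ k in atTop, ‖x k‖ < R := by
      simpa only [tendsto_atTop, not_forall, not_eventually, not_le] using hx
    obtain ⟨a, -, φ, hφ, ha⟩ := tendsto_subseq_of_frequently_bounded
      (Metric.isBounded_ball (x := (0 : E)) (r := R)) (by simpa using hR)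
    exact ⟨a, φ, hφ, ha⟩

theorem Submodule.exists_finrank_map_lt {K V : Type*} [Field K] [AddCommGroup V] [Module K V]
    [FiniteDimensional K V] {W : Submodule K V} {u : V} (huW : u ∈ W) (hu : u ≠ 0) :
    ∃ π : V →ₗ[K] V, finrank K (W.map π) < finrank K W ∧ ∀ z, ∃ r : K, π z = z + r • u := by
  obtain ⟨φ, hφ⟩ := Projective.exists_dual_eq_one K hu
  refine ⟨LinearMap.id - φ.smulRight u, Submodule.finrank_lt_finrank_of_lt ?_,
    fun z => ⟨-φ z, by simp [sub_eq_add_neg]⟩⟩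
  refine SetLike.lt_iff_le_and_exists.2 ⟨?_, u, huW, ?_⟩
  · rintro _ ⟨z, hz, rfl⟩
    simpa using W.sub_mem hz (W.smul_mem (φ z) huW)
  · rintro ⟨z, -, hz⟩
    have := congrArg φ hz
    simp [hφ] at this

namespace HasClosedLinearImages

variable {E : Type u} [NormedAddCommGroup E] [NormedSpace ℝ E] [FiniteDimensional ℝ E]

theorem isClosed_add {C₁ C₂ : Set E} (W : Submodule ℝ E) (hW₁ : C₁ ⊆ W) (hW₂ : C₂ ⊆ W)
    (hc₁ : Convex ℝ C₁) (hc₂ : Convex ℝ C₂) (h₁ : HasClosedLinearImages C₁)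
    (h₂ : HasClosedLinearImages C₂) : IsClosed (C₁ + C₂) := by
  induction hn : finrank ℝ W using Nat.strong_induction_on generalizing W C₁ C₂ with
  | _ n IH =>
  refine isClosed_of_closure_subset fun w hw => ?_
  obtain ⟨s, hs, hslim⟩ := mem_closure_iff_seq_limit.1 hw
  choose x hx y hy hxy using hs
  rcases exists_subseq_tendsto_or_norm_tendsto_atTop x with
    ⟨a, φ, hφ, ha⟩ | ⟨u, φ, hφ, hu, hnorm, hdir⟩
  · have hb : Tendsto (y ∘ φ) atTop (𝓝 (w - a)) :=
      ((hslim.comp hφ.tendsto_atTop).sub ha).congr fun k => by simp [← hxy]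
    exact ⟨a, h₁.isClosed.mem_of_tendsto ha (.of_forall fun k => hx _),
      w - a, h₂.isClosed.mem_of_tendsto hb (.of_forall fun k => hy _), add_sub_cancel _ _⟩
  have hu₁ : u ∈ asymptoticCone ℝ C₁ :=
    mem_asymptoticCone_of_tendsto (.of_forall fun k => hx (φ k)) hnorm hdir
  have hu₂ : -u ∈ asymptoticCone ℝ C₂ := by
    refine mem_asymptoticCone_of_tendsto (.of_forall fun k => hy (φ k)) hnorm ?_
    have := (hnorm.inv_tendsto_atTop.smul (hslim.comp hφ.tendsto_atTop)).sub hdir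
    simpa [← hxy, smul_add] using this
  have huW : u ∈ W := by
    simpa [asymptoticCone_submodule, W.closed_of_finiteDimensional.closure_eq]
      using asymptoticCone_mono hW₁ hu₁
  obtain ⟨π, hπW, hπ⟩ := W.exists_finrank_map_lt huW hu
  have hclosed : IsClosed (π '' C₁ + π '' C₂) :=
    IH _ (hn ▸ hπW) (W.map π) (Set.image_mono hW₁) (Set.image_mono hW₂)
      (hc₁.linear_image π) (hc₂.linear_image π) (h₁.image π) (h₂.image π) rfl
  have hmem : π w ∈ π '' C₁ + π '' C₂ :=
    hclosed.mem_of_tendsto ((π.continuous_of_finiteDimensional.tendsto w).comp hslim)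
      (.of_forall fun k => ⟨_, ⟨x k, hx k, rfl⟩, _, ⟨y k, hy k, rfl⟩, by simp [← hxy]⟩)
  obtain ⟨_, ⟨a, ha, rfl⟩, _, ⟨b, hb, rfl⟩, hab⟩ := hmem
  obtain ⟨ra, hra⟩ := hπ a
  obtain ⟨rb, hrb⟩ := hπ b
  obtain ⟨rw, hrw⟩ := hπ w
  have hw : w = a + b + (ra + rb - rw) • u := by
    rw [hra, hrb, hrw] at hab
    linear_combination (norm := module) -hab
  exact hw ▸ add_add_smul_mem_add hc₁ h₁.isClosed hc₂ h₂.isClosed hu₁ hu₂ ha hb _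

theorem prod {E₁ E₂ : Type u} [NormedAddCommGroup E₁] [NormedSpace ℝ E₁] [FiniteDimensional ℝ E₁]
    [NormedAddCommGroup E₂] [NormedSpace ℝ E₂] [FiniteDimensional ℝ E₂]
    {C₁ : Set E₁} {C₂ : Set E₂} (h₁ : HasClosedLinearImages C₁) (h₂ : HasClosedLinearImages C₂)
    (hc₁ : Convex ℝ C₁) (hc₂ : Convex ℝ C₂) :
    HasClosedLinearImages (C₁ ×ˢ C₂) := by
  intro F _ _ _ L
  have hL : L '' C₁ ×ˢ C₂ = (L ∘ₗ .inl ℝ E₁ E₂) '' C₁ + (L ∘ₗ .inr ℝ E₁ E₂) '' C₂ := by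
    rw [← Set.image2_add, Set.image2_image_left, Set.image2_image_right, ← Set.image_prod]
    exact Set.image_congr fun p _ => by simp [← map_add]
  rw [hL]
  exact isClosed_add ⊤ (fun _ _ => Submodule.mem_top) (fun _ _ => Submodule.mem_top)
    (hc₁.linear_image _) (hc₂.linear_image _) (h₁.image _) (h₂.image _)

end HasClosedLinearImages

theorem eq_zero_of_forall_abs_mul_le {a M : ℝ} (h : ∀ t : ℝ, 1 ≤ t → |a * t| ≤ M) : a = 0 := by
  by_contra ha
  have := h ((|M| + 1) / |a| + 1) (by simp; positivity)
  rw [abs_mul, abs_of_pos (by positivity : 0 < (|M| + 1) / |a| + 1), mul_add,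
    mul_div_cancel₀ _ (abs_ne_zero.2 ha)] at this
  linarith [le_abs_self M, abs_nonneg a]

theorem eq_zero_of_forall_abs_quadratic_le {a b M : ℝ}
    (h : ∀ t : ℝ, 0 ≤ t → |a * t ^ 2 + b * t| ≤ M) : a = 0 ∧ b = 0 := by
  have ha : a = 0 := by
    refine eq_zero_of_forall_abs_mul_le (M := 3 * M) fun t ht => ?_
    have h₁ := abs_le.1 (h t (by linarith))
    have h₂ := abs_le.1 (h (2 * t) (by linarith))
    rw [abs_le]
    rcases le_total 0 a with ha | ha <;> constructor <;> nlinarith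
  subst ha
  exact ⟨rfl, eq_zero_of_forall_abs_mul_le fun t ht => by simpa using h t (by linarith)⟩

namespace IsQuadratic

theorem exists_add_smul_eq {E : Type*} [AddCommGroup E] [Module ℝ E] {f : E → ℝ}
    (hf : IsQuadratic f) (u : E) : ∃ (φ : E →ₗ[ℝ] ℝ) (b q : ℝ), ∀ w (t : ℝ),
      f (w + t • u) = f w + t * (φ w + b) + t ^ 2 * q := by
  obtain ⟨B, l, c, hf⟩ := hf
  refine ⟨B.flip u + B u, l u, B u u, fun w t => ?_⟩
  simp only [hf, map_add, map_smul, LinearMap.add_apply, LinearMap.smul_apply, LinearMap.flip_apply,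
    smul_eq_mul]
  ring

variable {E : Type u} [NormedAddCommGroup E] [NormedSpace ℝ E] {f : E → ℝ}

theorem continuous [FiniteDimensional ℝ E] (hf : IsQuadratic f) : Continuous f := by
  obtain ⟨B, l, c, hf⟩ := hf
  have hB : Continuous fun z => B z z :=
    ((LinearMap.toContinuousLinearMap.toLinearMap ∘ₗ B).continuous_of_finiteDimensional).clm_apply
      continuous_id
  exact ((hB.add l.continuous_of_finiteDimensional).add continuous_const).congr fun z => (hf z).symm

theorem exists_hyperplane_invariant (hf : IsQuadratic f) {G : Set E} {u : E} {μ ν : ℝ}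
    (hGc : Convex ℝ G) (hG : IsClosed G) (hne : G.Nonempty) (hbdd : ∀ z ∈ G, f z ∈ Set.Icc μ ν)
    (hu : u ∈ asymptoticCone ℝ G) :
    ∃ (φ : E →ₗ[ℝ] ℝ) (b : ℝ), G ⊆ φ ⁻¹' {b} ∧ ∀ z ∈ φ ⁻¹' {b}, ∀ t : ℝ, f (z + t • u) = f z := by
  obtain ⟨φ, b, q, hfu⟩ := hf.exists_add_smul_eq u
  have hcoef : ∀ w ∈ G, q = 0 ∧ φ w + b = 0 := fun w hw =>
    eq_zero_of_forall_abs_quadratic_le (M := ν - μ) fun t ht => by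
      have hwt := hGc.smul_vadd_mem_of_isClosed_of_mem_asymptoticCone hG ht hu hw
      rw [vadd_eq_add, add_comm] at hwt
      obtain ⟨h₁, h₂⟩ := hbdd _ hwt
      obtain ⟨h₃, h₄⟩ := hbdd w hw
      rw [hfu] at h₁ h₂
      rw [abs_le]; constructor <;> linarith
  obtain ⟨w, hw⟩ := hne
  refine ⟨φ, -b, fun z hz => eq_neg_of_add_eq_zero_left (hcoef z hz).2, fun z hz t => ?_⟩
  rw [hfu, (hcoef w hw).1, show φ z = -b from hz]
  ring

theorem exists_le_or_mem_asymptoticCone [FiniteDimensional ℝ E] (hf : IsQuadratic f)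
    {μ α₀ : ℝ} (hμ : μ < α₀) {H : Set E} (hH : IsClosed H)
    (hne : ∀ α ∈ Set.Ioc μ α₀, ∃ z ∈ H, f z ≤ α) :
    (∃ z ∈ H, f z ≤ μ) ∨ ∃ u ≠ 0, u ∈ asymptoticCone ℝ {z ∈ H | f z ≤ α₀} := by
  obtain ⟨a, -, ha, ha_lim⟩ := exists_seq_strictAnti_tendsto' hμ
  choose z hzH hza using fun k => hne (a k) (Set.Ioo_subset_Ioc_self (ha k))
  rcases exists_subseq_tendsto_or_norm_tendsto_atTop z with
    ⟨z₀, φ, hφ, hz₀⟩ | ⟨u, φ, hφ, hu, hnorm, hdir⟩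
  · refine .inl ⟨z₀, hH.mem_of_tendsto hz₀ (.of_forall fun k => hzH _), ?_⟩
    exact le_of_tendsto_of_tendsto ((hf.continuous.tendsto z₀).comp hz₀)
      (ha_lim.comp hφ.tendsto_atTop) (.of_forall fun k => hza _)
  · refine .inr ⟨u, hu, mem_asymptoticCone_of_tendsto (.of_forall fun k => ?_) hnorm hdir⟩
    exact ⟨hzH _, (hza _).trans (ha _).2.le⟩

-- Only the sublevel set at `α₀` is known to lie in the invariant hyperplane, so the hypotheses
-- cannot extend above `α₀` without breaking the induction.
theorem exists_le_of_hasClosedLinearImages [FiniteDimensional ℝ E] (hf : IsQuadratic f)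
    {μ α₀ : ℝ} (hμ : μ < α₀) (W : Submodule ℝ E) {H : Set E} (hHW : H ⊆ W)
    (hH : HasClosedLinearImages H) (hlb : ∀ z ∈ H, μ ≤ f z) (hconv : Convex ℝ {z ∈ H | f z ≤ α₀})
    (hne : ∀ α ∈ Set.Ioc μ α₀, ∃ z ∈ H, f z ≤ α) : ∃ z ∈ H, f z ≤ μ := by
  induction hn : finrank ℝ W using Nat.strong_induction_on generalizing W H with
  | _ n IH =>
  set G := {z ∈ H | f z ≤ α₀}
  obtain hmin | ⟨u, hu, huG⟩ := hf.exists_le_or_mem_asymptoticCone hμ hH.isClosed hne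
  · exact hmin
  have huW : u ∈ W := by
    simpa [asymptoticCone_submodule, W.closed_of_finiteDimensional.closure_eq]
      using asymptoticCone_mono ((Set.sep_subset _ _).trans hHW) huG
  obtain ⟨ψ, b, hGψ, hfψ⟩ := hf.exists_hyperplane_invariant hconv
    (hH.isClosed.inter (isClosed_le hf.continuous continuous_const)) (hne α₀ ⟨hμ, le_rfl⟩)
    (fun z hz => ⟨hlb z hz.1, hz.2⟩) huG
  obtain ⟨π, hπW, hπ⟩ := W.exists_finrank_map_lt huW hu
  have hfπ : ∀ z ∈ ψ ⁻¹' {b}, f (π z) = f z := fun z hz => by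
    obtain ⟨r, hr⟩ := hπ z
    rw [hr, hfψ z hz]
  set S := H ∩ ψ ⁻¹' {b}
  have hGπ : {p ∈ π '' S | f p ≤ α₀} = π '' G := by
    ext p
    constructor
    · rintro ⟨⟨y, hyS, rfl⟩, hy⟩
      exact ⟨y, ⟨hyS.1, hfπ y hyS.2 ▸ hy⟩, rfl⟩
    · rintro ⟨y, hyG, rfl⟩
      exact ⟨⟨y, ⟨hyG.1, hGψ hyG⟩, rfl⟩, (hfπ y (hGψ hyG)).symm ▸ hyG.2⟩
  have hne' : ∀ α ∈ Set.Ioc μ α₀, ∃ p ∈ π '' S, f p ≤ α := fun α hα => by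
    obtain ⟨y, hyH, hyα⟩ := hne α hα
    have hyS : y ∈ S := ⟨hyH, hGψ ⟨hyH, hyα.trans hα.2⟩⟩
    exact ⟨π y, ⟨y, hyS, rfl⟩, (hfπ y hyS.2).symm ▸ hyα⟩
  obtain ⟨_, ⟨y, hyS, rfl⟩, hy⟩ := IH _ (hn ▸ hπW) (W.map π) (H := π '' S)
    (Set.image_mono (Set.inter_subset_left.trans hHW)) ((hH.inter_preimage_singleton ψ b).image π)
    (by rintro _ ⟨y, hy, rfl⟩; exact (hfπ y hy.2).symm ▸ hlb y hy.1) (hGπ ▸ hconv.linear_image π)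
    hne' rfl
  exact ⟨y, hyS.1, hfπ y hyS.2 ▸ hy⟩

end IsQuadratic

namespace IsQFWSet

theorem nonempty {E : Type*} [AddCommGroup E] [Module ℝ E] {S : Set E} (h : IsQFWSet S) :
    S.Nonempty := by
  obtain ⟨x, hx, -⟩ := h.2 (fun _ => 0) ⟨0, 0, 0, by simp⟩
    (fun α => (convexOn_const 0 h.1).convex_le α) ⟨0, by rintro _ ⟨x, -, rfl⟩; rfl⟩
  exact ⟨x, hx⟩

theorem isClosed_image {E G : Type*} [AddCommGroup E] [Module ℝ E] [NormedAddCommGroup G]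
    [InnerProductSpace ℝ G] {S : Set E} (h : IsQFWSet S) (L : E →ₗ[ℝ] G) : IsClosed (L '' S) := by
  refine isClosed_of_closure_subset fun w hw => ?_
  have hq : IsQuadratic fun z => ‖L z - w‖ ^ 2 :=
    ⟨(innerₗ G).compl₁₂ L L, (-2 : ℝ) • (innerₗ G w ∘ₗ L), ‖w‖ ^ 2, fun z => by
      simp [norm_sub_sq_real, real_inner_comm]; ring⟩
  have hconv : ConvexOn ℝ S fun z => ‖L z - w‖ ^ 2 := by
    refine ((((convexOn_univ_norm.translate_right (-w)).comp_linearMap L).subset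
      (Set.subset_univ S) h.1).pow (fun _ _ => norm_nonneg _) 2).congr fun z _ => ?_
    simp [neg_add_eq_sub]
  obtain ⟨x, hx, hmin⟩ := h.2 _ hq hconv.convex_le ⟨0, by rintro _ ⟨z, -, rfl⟩; positivity⟩
  refine ⟨x, hx, ?_⟩
  by_contra hne
  have hpos : 0 < ‖L x - w‖ := norm_pos_iff.2 (sub_ne_zero.2 hne)
  obtain ⟨_, ⟨z, hz, rfl⟩, hzw⟩ := Metric.mem_closure_iff.1 hw _ hpos
  rw [dist_eq_norm, norm_sub_rev] at hzw
  nlinarith [hmin z hz, norm_nonneg (L z - w)]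

theorem hasClosedLinearImages {E : Type u} [NormedAddCommGroup E] [NormedSpace ℝ E] {S : Set E}
    (h : IsQFWSet S) : HasClosedLinearImages S := by
  intro F _ _ _ L
  let e : F ≃L[ℝ] EuclideanSpace ℝ (Fin (finrank ℝ F)) :=
    .ofFinrankEq finrank_euclideanSpace_fin.symm
  rw [← e.isClosed_image, Set.image_image]
  exact h.isClosed_image (e.toLinearMap ∘ₗ L)

end IsQFWSet

theorem HasClosedLinearImages.isQFWSet {E : Type u} [NormedAddCommGroup E] [NormedSpace ℝ E]
    [FiniteDimensional ℝ E] {S : Set E} (hS : HasClosedLinearImages S) (hc : Convex ℝ S)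
    (hne : S.Nonempty) : IsQFWSet S := by
  refine ⟨hc, fun f hf hqc hbdd => ?_⟩
  have hμ : ∀ x ∈ S, sInf (f '' S) ≤ f x := fun x hx => csInf_le hbdd ⟨x, hx, rfl⟩
  have hlt : ∀ α ∈ Set.Ioc (sInf (f '' S)) (sInf (f '' S) + 1), ∃ x ∈ S, f x ≤ α := by
    rintro α ⟨hα, -⟩
    obtain ⟨_, ⟨x, hx, rfl⟩, hxα⟩ := exists_lt_of_csInf_lt (hne.image f) hα
    exact ⟨x, hx, hxα.le⟩
  obtain ⟨x, hx, hxμ⟩ := hf.exists_le_of_hasClosedLinearImages (lt_add_one _) ⊤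
    (fun _ _ => Submodule.mem_top) hS hμ (hqc _) hlt
  exact ⟨x, hx, fun y hy => hxμ.trans (hμ y hy)⟩

theorem qFW_prod {d₁ d₂ : ℕ}
    (F₁ : Set (EuclideanSpace ℝ (Fin d₁))) (F₂ : Set (EuclideanSpace ℝ (Fin d₂)))
    (h₁ : IsQFWSet F₁) (h₂ : IsQFWSet F₂) :
    IsQFWSet (F₁ ×ˢ F₂) :=
  (h₁.hasClosedLinearImages.prod h₂.hasClosedLinearImages h₁.1 h₂.1).isQFWSet (h₁.1.prod h₂.1)
    (h₁.nonempty.prod h₂.nonempty)
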